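/- If both independence (I(R;A)=0) and sufficiency (I(Y;A|R)=0) hold, then I(A;R|Y) = -I(A;Y) ≤ 0, and since conditional mutual information is nonnegative, I(A;Y)=0, i.e., A and Y are independent. -/
import Mathlib


open Finset

open scoped Classical

/-- probability of an event under a pmf on a finite sample space -/
noncomputable def pr {Ω : Type*} [Fintype Ω] (p : Ω → ℝ) (E : Ω → Prop) : ℝ :=
  ∑ ω, if E ω then p ω else 0

/-- `p` is a probability mass function -/
def IsPMF {Ω : Type*} [Fintype Ω] (p : Ω → ℝ) : Prop :=
  (∀ ω, 0 ≤ p ω) ∧ ∑ ω, p ω = 1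

/-- mutual information I(X;Y) of finitely supported discrete random variables -/
noncomputable def mutualInfo {Ω : Type*} [Fintype Ω] {S T : Type*} [Fintype S] [Fintype T]
    (p : Ω → ℝ) (X : Ω → S) (Y : Ω → T) : ℝ :=
  ∑ x : S, ∑ y : T,
    pr p (fun ω => X ω = x ∧ Y ω = y) *
      Real.log (pr p (fun ω => X ω = x ∧ Y ω = y) /
        (pr p (fun ω => X ω = x) * pr p (fun ω => Y ω = y)))

/-- conditional mutual information I(X;Y∣Z) -/
noncomputable def condMutualInfo {Ω : Type*} [Fintype Ω] {S T U : Type*}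
    [Fintype S] [Fintype T] [Fintype U]
    (p : Ω → ℝ) (X : Ω → S) (Y : Ω → T) (Z : Ω → U) : ℝ :=
  ∑ x : S, ∑ y : T, ∑ z : U,
    pr p (fun ω => X ω = x ∧ Y ω = y ∧ Z ω = z) *
      Real.log ((pr p (fun ω => Z ω = z) *
          pr p (fun ω => X ω = x ∧ Y ω = y ∧ Z ω = z)) /
        (pr p (fun ω => X ω = x ∧ Z ω = z) * pr p (fun ω => Y ω = y ∧ Z ω = z)))

/-- Shannon entropy H(X) -/
noncomputable def entropy {Ω : Type*} [Fintype Ω] {S : Type*} [Fintype S]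
    (p : Ω → ℝ) (X : Ω → S) : ℝ :=
  - ∑ x : S, pr p (fun ω => X ω = x) * Real.log (pr p (fun ω => X ω = x))

/-- conditional Shannon entropy H(X∣Z) -/
noncomputable def condEntropy {Ω : Type*} [Fintype Ω] {S U : Type*} [Fintype S] [Fintype U]
    (p : Ω → ℝ) (X : Ω → S) (Z : Ω → U) : ℝ :=
  - ∑ x : S, ∑ z : U,
      pr p (fun ω => X ω = x ∧ Z ω = z) *
        Real.log (pr p (fun ω => X ω = x ∧ Z ω = z) / pr p (fun ω => Z ω = z))

section Aux

variable {Ω : Type*} [Fintype Ω] {p : Ω → ℝ}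

lemma pr_nonneg (hp : ∀ ω, 0 ≤ p ω) (E : Ω → Prop) : 0 ≤ pr p E := by
  refine Finset.sum_nonneg fun ω _ => ?_
  by_cases h : E ω <;> simp [h, hp ω]

lemma pr_mono (hp : ∀ ω, 0 ≤ p ω) {E F : Ω → Prop} (h : ∀ ω, E ω → F ω) :
    pr p E ≤ pr p F := by
  refine Finset.sum_le_sum fun ω _ => ?_
  by_cases hE : E ω
  · simp [hE, h ω hE]
  · simp only [hE, if_false]
    by_cases hF : F ω <;> simp [hF, hp ω]

lemma pr_congr {E F : Ω → Prop} (h : ∀ ω, E ω ↔ F ω) : pr p E = pr p F :=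
  Finset.sum_congr rfl fun ω _ => if_congr (h ω) rfl rfl

lemma pr_split {T : Type*} [Fintype T] (X : Ω → T) (E : Ω → Prop) :
    ∑ t : T, pr p (fun ω => E ω ∧ X ω = t) = pr p E := by
  unfold pr
  rw [Finset.sum_comm]
  refine Finset.sum_congr rfl fun ω _ => ?_
  by_cases hE : E ω <;> simp [hE]

lemma pr_split' {T : Type*} [Fintype T] (X : Ω → T) (E : Ω → Prop) :
    ∑ t : T, pr p (fun ω => X ω = t ∧ E ω) = pr p E := by
  rw [← pr_split X E]
  exact Finset.sum_congr rfl fun t _ => pr_congr fun ω => and_comm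

lemma pr_total (hp : IsPMF p) {T : Type*} [Fintype T] (X : Ω → T) :
    ∑ t : T, pr p (fun ω => X ω = t) = 1 := by
  have h : ∑ t : T, pr p (fun ω => (fun _ : Ω => True) ω ∧ X ω = t)
      = pr p (fun _ => True) := pr_split X _
  simp only [true_and] at h
  rw [h]
  simpa [pr] using hp.2

lemma mul_log_div_ge {a b : ℝ} (ha : 0 < a) (hb : 0 < b) :
    a - b ≤ a * Real.log (a / b) := by
  have h := Real.log_le_sub_one_of_pos (show 0 < b / a by positivity)
  have hlog : Real.log (a / b) = - Real.log (b / a) := by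
    rw [← Real.log_inv]
    congr 1
    field_simp
  rw [hlog]
  have hba : b / a - 1 = (b - a) / a := by field_simp
  rw [hba] at h
  have := mul_le_mul_of_nonneg_left h (le_of_lt ha)
  rw [mul_div_cancel₀ _ (ne_of_gt ha)] at this
  linarith

lemma mutualInfo_nonneg {S T : Type*} [Fintype S] [Fintype T] (hp : IsPMF p)
    (X : Ω → S) (Y : Ω → T) : 0 ≤ mutualInfo p X Y := by
  have hp0 := hp.1
  have key : ∀ x : S, ∀ y : T,
      pr p (fun ω => X ω = x ∧ Y ω = y)
        - pr p (fun ω => X ω = x) * pr p (fun ω => Y ω = y)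
      ≤ pr p (fun ω => X ω = x ∧ Y ω = y) *
          Real.log (pr p (fun ω => X ω = x ∧ Y ω = y) /
            (pr p (fun ω => X ω = x) * pr p (fun ω => Y ω = y))) := by
    intro x y
    rcases eq_or_lt_of_le (pr_nonneg hp0 (fun ω => X ω = x ∧ Y ω = y)) with h0 | h0
    · rw [← h0, zero_mul]
      have := mul_nonneg (pr_nonneg hp0 (fun ω => X ω = x)) (pr_nonneg hp0 (fun ω => Y ω = y))
      linarith
    · have hm1 : 0 < pr p (fun ω => X ω = x) :=
        lt_of_lt_of_le h0 (pr_mono hp0 fun ω h => h.1)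
      have hm2 : 0 < pr p (fun ω => Y ω = y) :=
        lt_of_lt_of_le h0 (pr_mono hp0 fun ω h => h.2)
      exact mul_log_div_ge h0 (mul_pos hm1 hm2)
  have h1 : ∑ x : S, ∑ y : T, pr p (fun ω => X ω = x ∧ Y ω = y) = 1 := by
    rw [Finset.sum_congr rfl fun x _ => pr_split Y (fun ω => X ω = x)]
    exact pr_total ⟨hp0, hp.2⟩ X
  have h2 : ∑ x : S, ∑ y : T, pr p (fun ω => X ω = x) * pr p (fun ω => Y ω = y) = 1 := by
    rw [← Finset.sum_mul_sum, pr_total ⟨hp0, hp.2⟩ X, pr_total ⟨hp0, hp.2⟩ Y, one_mul]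
  have h3 : (0 : ℝ) = (∑ x : S, ∑ y : T, pr p (fun ω => X ω = x ∧ Y ω = y))
      - ∑ x : S, ∑ y : T, pr p (fun ω => X ω = x) * pr p (fun ω => Y ω = y) := by
    rw [h1, h2]; ring
  rw [h3]
  unfold mutualInfo
  rw [← Finset.sum_sub_distrib]
  refine Finset.sum_le_sum fun x _ => ?_
  rw [← Finset.sum_sub_distrib]
  exact Finset.sum_le_sum fun y _ => key x y

lemma condMutualInfo_nonneg {S T U : Type*} [Fintype S] [Fintype T] [Fintype U]
    (hp : IsPMF p) (X : Ω → S) (Y : Ω → T) (Z : Ω → U) :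
    0 ≤ condMutualInfo p X Y Z := by
  have hp0 := hp.1
  have key : ∀ x : S, ∀ y : T, ∀ z : U,
      pr p (fun ω => X ω = x ∧ Y ω = y ∧ Z ω = z)
        - pr p (fun ω => X ω = x ∧ Z ω = z) * pr p (fun ω => Y ω = y ∧ Z ω = z)
            / pr p (fun ω => Z ω = z)
      ≤ pr p (fun ω => X ω = x ∧ Y ω = y ∧ Z ω = z) *
          Real.log ((pr p (fun ω => Z ω = z) *
              pr p (fun ω => X ω = x ∧ Y ω = y ∧ Z ω = z)) /
            (pr p (fun ω => X ω = x ∧ Z ω = z) * pr p (fun ω => Y ω = y ∧ Z ω = z))) := by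
    intro x y z
    rcases eq_or_lt_of_le (pr_nonneg hp0 (fun ω => X ω = x ∧ Y ω = y ∧ Z ω = z)) with h0 | h0
    · rw [← h0, zero_mul]
      have := div_nonneg (mul_nonneg (pr_nonneg hp0 (fun ω => X ω = x ∧ Z ω = z))
        (pr_nonneg hp0 (fun ω => Y ω = y ∧ Z ω = z))) (pr_nonneg hp0 (fun ω => Z ω = z))
      linarith
    · have hXZ : 0 < pr p (fun ω => X ω = x ∧ Z ω = z) :=
        lt_of_lt_of_le h0 (pr_mono hp0 fun ω h => ⟨h.1, h.2.2⟩)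
      have hYZ : 0 < pr p (fun ω => Y ω = y ∧ Z ω = z) :=
        lt_of_lt_of_le h0 (pr_mono hp0 fun ω h => ⟨h.2.1, h.2.2⟩)
      have hZ : 0 < pr p (fun ω => Z ω = z) :=
        lt_of_lt_of_le h0 (pr_mono hp0 fun ω h => h.2.2)
      have harg : (pr p (fun ω => Z ω = z) *
              pr p (fun ω => X ω = x ∧ Y ω = y ∧ Z ω = z)) /
            (pr p (fun ω => X ω = x ∧ Z ω = z) * pr p (fun ω => Y ω = y ∧ Z ω = z))
          = pr p (fun ω => X ω = x ∧ Y ω = y ∧ Z ω = z) /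
            (pr p (fun ω => X ω = x ∧ Z ω = z) * pr p (fun ω => Y ω = y ∧ Z ω = z)
              / pr p (fun ω => Z ω = z)) := by
        field_simp
      rw [harg]
      exact mul_log_div_ge h0 (by positivity)
  have h1 : ∑ x : S, ∑ y : T, ∑ z : U,
      pr p (fun ω => X ω = x ∧ Y ω = y ∧ Z ω = z) = 1 := by
    calc ∑ x : S, ∑ y : T, ∑ z : U, pr p (fun ω => X ω = x ∧ Y ω = y ∧ Z ω = z)
        = ∑ x : S, ∑ y : T, pr p (fun ω => X ω = x ∧ Y ω = y) := by
          refine Finset.sum_congr rfl fun x _ => Finset.sum_congr rfl fun y _ => ?_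
          rw [← pr_split Z (fun ω => X ω = x ∧ Y ω = y)]
          exact Finset.sum_congr rfl fun z _ => pr_congr fun ω => (and_assoc).symm
      _ = ∑ x : S, pr p (fun ω => X ω = x) :=
          Finset.sum_congr rfl fun x _ => pr_split Y (fun ω => X ω = x)
      _ = 1 := pr_total ⟨hp0, hp.2⟩ X
  have h2 : ∑ x : S, ∑ y : T, ∑ z : U,
      pr p (fun ω => X ω = x ∧ Z ω = z) * pr p (fun ω => Y ω = y ∧ Z ω = z)
        / pr p (fun ω => Z ω = z) ≤ 1 := by
    have hz : ∀ z : U, ∑ x : S, ∑ y : T,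
        pr p (fun ω => X ω = x ∧ Z ω = z) * pr p (fun ω => Y ω = y ∧ Z ω = z)
          / pr p (fun ω => Z ω = z) ≤ pr p (fun ω => Z ω = z) := by
      intro z
      have e : ∑ x : S, ∑ y : T,
          pr p (fun ω => X ω = x ∧ Z ω = z) * pr p (fun ω => Y ω = y ∧ Z ω = z)
            / pr p (fun ω => Z ω = z)
          = (∑ x : S, pr p (fun ω => X ω = x ∧ Z ω = z)) *
            (∑ y : T, pr p (fun ω => Y ω = y ∧ Z ω = z)) / pr p (fun ω => Z ω = z) := by
        rw [Finset.sum_mul_sum, Finset.sum_div]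
        exact Finset.sum_congr rfl fun x _ => (Finset.sum_div _ _ _).symm
      rw [e, pr_split' X (fun ω => Z ω = z), pr_split' Y (fun ω => Z ω = z)]
      rcases eq_or_lt_of_le (pr_nonneg hp0 (fun ω => Z ω = z)) with h0 | h0
      · rw [← h0]; simp
      · rw [div_le_iff₀ h0]
    calc ∑ x : S, ∑ y : T, ∑ z : U,
        pr p (fun ω => X ω = x ∧ Z ω = z) * pr p (fun ω => Y ω = y ∧ Z ω = z)
          / pr p (fun ω => Z ω = z)
        = ∑ x : S, ∑ z : U, ∑ y : T,
            pr p (fun ω => X ω = x ∧ Z ω = z) * pr p (fun ω => Y ω = y ∧ Z ω = z)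
              / pr p (fun ω => Z ω = z) :=
          Finset.sum_congr rfl fun x _ => Finset.sum_comm
      _ = ∑ z : U, ∑ x : S, ∑ y : T,
            pr p (fun ω => X ω = x ∧ Z ω = z) * pr p (fun ω => Y ω = y ∧ Z ω = z)
              / pr p (fun ω => Z ω = z) := Finset.sum_comm
      _ ≤ ∑ z : U, pr p (fun ω => Z ω = z) := Finset.sum_le_sum fun z _ => hz z
      _ = 1 := pr_total ⟨hp0, hp.2⟩ Z
  have h3 : (0 : ℝ) ≤ (∑ x : S, ∑ y : T, ∑ z : U,
      pr p (fun ω => X ω = x ∧ Y ω = y ∧ Z ω = z))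
      - ∑ x : S, ∑ y : T, ∑ z : U,
        pr p (fun ω => X ω = x ∧ Z ω = z) * pr p (fun ω => Y ω = y ∧ Z ω = z)
          / pr p (fun ω => Z ω = z) := by
    rw [h1]; linarith
  refine le_trans h3 ?_
  unfold condMutualInfo
  rw [← Finset.sum_sub_distrib]
  refine Finset.sum_le_sum fun x _ => ?_
  rw [← Finset.sum_sub_distrib]
  refine Finset.sum_le_sum fun y _ => ?_
  rw [← Finset.sum_sub_distrib]
  exact Finset.sum_le_sum fun z _ => key x y z

lemma mutualInfo_comm {S T : Type*} [Fintype S] [Fintype T] (X : Ω → S) (Y : Ω → T) :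
    mutualInfo p X Y = mutualInfo p Y X := by
  unfold mutualInfo
  rw [Finset.sum_comm]
  refine Finset.sum_congr rfl fun y _ => Finset.sum_congr rfl fun x _ => ?_
  have h : pr p (fun ω => X ω = x ∧ Y ω = y) = pr p (fun ω => Y ω = y ∧ X ω = x) :=
    pr_congr fun ω => and_comm
  rw [h, mul_comm (pr p (fun ω => X ω = x))]

lemma condMutualInfo_comm {S T U : Type*} [Fintype S] [Fintype T] [Fintype U]
    (X : Ω → S) (Y : Ω → T) (Z : Ω → U) :
    condMutualInfo p X Y Z = condMutualInfo p Y X Z := by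
  unfold condMutualInfo
  rw [Finset.sum_comm]
  refine Finset.sum_congr rfl fun y _ => Finset.sum_congr rfl fun x _ =>
    Finset.sum_congr rfl fun z _ => ?_
  have h : pr p (fun ω => X ω = x ∧ Y ω = y ∧ Z ω = z)
      = pr p (fun ω => Y ω = y ∧ X ω = x ∧ Z ω = z) := pr_congr fun ω => by tauto
  rw [h, mul_comm (pr p (fun ω => X ω = x ∧ Z ω = z))]

lemma chain_identity {S T U : Type*} [Fintype S] [Fintype T] [Fintype U]
    (hp : IsPMF p) (A : Ω → S) (Y : Ω → T) (R : Ω → U) :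
    mutualInfo p A Y + condMutualInfo p A R Y
      = mutualInfo p A R + condMutualInfo p A Y R := by
  have hp0 := hp.1
  set q : S → T → U → ℝ :=
    fun a y r => pr p (fun ω => A ω = a ∧ Y ω = y ∧ R ω = r) with hq
  have hAY : mutualInfo p A Y = ∑ a : S, ∑ y : T, ∑ r : U,
      q a y r * Real.log (pr p (fun ω => A ω = a ∧ Y ω = y) /
        (pr p (fun ω => A ω = a) * pr p (fun ω => Y ω = y))) := by
    unfold mutualInfo
    refine Finset.sum_congr rfl fun a _ => Finset.sum_congr rfl fun y _ => ?_
    rw [← Finset.sum_mul]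
    congr 1
    rw [← pr_split R (fun ω => A ω = a ∧ Y ω = y)]
    exact Finset.sum_congr rfl fun r _ => pr_congr fun ω => and_assoc
  have hAR : mutualInfo p A R = ∑ a : S, ∑ y : T, ∑ r : U,
      q a y r * Real.log (pr p (fun ω => A ω = a ∧ R ω = r) /
        (pr p (fun ω => A ω = a) * pr p (fun ω => R ω = r))) := by
    unfold mutualInfo
    refine Finset.sum_congr rfl fun a _ => ?_
    rw [Finset.sum_comm]
    refine Finset.sum_congr rfl fun r _ => ?_
    rw [← Finset.sum_mul]
    congr 1
    rw [← pr_split Y (fun ω => A ω = a ∧ R ω = r)]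
    exact Finset.sum_congr rfl fun y _ => pr_congr fun ω => by tauto
  have hARY : condMutualInfo p A R Y = ∑ a : S, ∑ y : T, ∑ r : U,
      q a y r * Real.log ((pr p (fun ω => Y ω = y) * q a y r) /
        (pr p (fun ω => A ω = a ∧ Y ω = y) * pr p (fun ω => R ω = r ∧ Y ω = y))) := by
    unfold condMutualInfo
    refine Finset.sum_congr rfl fun a _ => ?_
    rw [Finset.sum_comm]
    refine Finset.sum_congr rfl fun y _ => Finset.sum_congr rfl fun r _ => ?_
    have h : pr p (fun ω => A ω = a ∧ R ω = r ∧ Y ω = y) = q a y r :=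
      pr_congr fun ω => by tauto
    rw [h]
  have hAYR : condMutualInfo p A Y R = ∑ a : S, ∑ y : T, ∑ r : U,
      q a y r * Real.log ((pr p (fun ω => R ω = r) * q a y r) /
        (pr p (fun ω => A ω = a ∧ R ω = r) * pr p (fun ω => Y ω = y ∧ R ω = r))) := rfl
  rw [hAY, hAR, hARY, hAYR]
  rw [← Finset.sum_add_distrib, ← Finset.sum_add_distrib]
  refine Finset.sum_congr rfl fun a _ => ?_
  rw [← Finset.sum_add_distrib, ← Finset.sum_add_distrib]
  refine Finset.sum_congr rfl fun y _ => ?_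
  rw [← Finset.sum_add_distrib, ← Finset.sum_add_distrib]
  refine Finset.sum_congr rfl fun r _ => ?_
  rcases eq_or_lt_of_le (pr_nonneg hp0 (fun ω => A ω = a ∧ Y ω = y ∧ R ω = r)) with h0 | h0
  · rw [hq]
    simp only [← h0]
    ring
  · have hq0 : 0 < q a y r := h0
    have hAYpos : 0 < pr p (fun ω => A ω = a ∧ Y ω = y) :=
      lt_of_lt_of_le h0 (pr_mono hp0 fun ω h => ⟨h.1, h.2.1⟩)
    have hARpos : 0 < pr p (fun ω => A ω = a ∧ R ω = r) :=
      lt_of_lt_of_le h0 (pr_mono hp0 fun ω h => ⟨h.1, h.2.2⟩)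
    have hYRpos : 0 < pr p (fun ω => Y ω = y ∧ R ω = r) :=
      lt_of_lt_of_le h0 (pr_mono hp0 fun ω h => ⟨h.2.1, h.2.2⟩)
    have hApos : 0 < pr p (fun ω => A ω = a) :=
      lt_of_lt_of_le h0 (pr_mono hp0 fun ω h => h.1)
    have hYpos : 0 < pr p (fun ω => Y ω = y) :=
      lt_of_lt_of_le h0 (pr_mono hp0 fun ω h => h.2.1)
    have hRpos : 0 < pr p (fun ω => R ω = r) :=
      lt_of_lt_of_le h0 (pr_mono hp0 fun ω h => h.2.2)
    have hRY : pr p (fun ω => R ω = r ∧ Y ω = y) = pr p (fun ω => Y ω = y ∧ R ω = r) :=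
      pr_congr fun ω => and_comm
    rw [hRY]
    rw [Real.log_div (ne_of_gt hAYpos) (ne_of_gt (mul_pos hApos hYpos)),
        Real.log_mul (ne_of_gt hApos) (ne_of_gt hYpos),
        Real.log_div (ne_of_gt (mul_pos hYpos hq0)) (ne_of_gt (mul_pos hAYpos hYRpos)),
        Real.log_mul (ne_of_gt hYpos) (ne_of_gt hq0),
        Real.log_mul (ne_of_gt hAYpos) (ne_of_gt hYRpos),
        Real.log_div (ne_of_gt hARpos) (ne_of_gt (mul_pos hApos hRpos)),
        Real.log_mul (ne_of_gt hApos) (ne_of_gt hRpos),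
        Real.log_div (ne_of_gt (mul_pos hRpos hq0)) (ne_of_gt (mul_pos hARpos hYRpos)),
        Real.log_mul (ne_of_gt hRpos) (ne_of_gt hq0),
        Real.log_mul (ne_of_gt hARpos) (ne_of_gt hYRpos)]
    ring

end Aux

theorem legacy_zero_of_independence_and_sufficiency {Ω : Type*} [Fintype Ω] {𝒴 𝒜 ℛ : Type*} [Fintype 𝒴] [Fintype 𝒜] [Fintype ℛ]
    (p : Ω → ℝ) (hp : IsPMF p) (Y : Ω → 𝒴) (A : Ω → 𝒜) (R : Ω → ℛ)
    (hind : mutualInfo p R A = 0) (hsuf : condMutualInfo p Y A R = 0) :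
    condMutualInfo p A R Y = -mutualInfo p A Y ∧ mutualInfo p A Y = 0 := by
  have hAR : mutualInfo p A R = 0 := by
    rw [mutualInfo_comm]; exact hind
  have hAYR : condMutualInfo p A Y R = 0 := by
    rw [condMutualInfo_comm]; exact hsuf
  have hchain := chain_identity hp A Y R
  rw [hAR, hAYR] at hchain
  have h1 : 0 ≤ mutualInfo p A Y := mutualInfo_nonneg hp A Y
  have h2 : 0 ≤ condMutualInfo p A R Y := condMutualInfo_nonneg hp A R Y
  constructor <;> linarith
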